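/- For x ≥ 1/2, the second central moment of K_n* equals K_n*((t−x)²;x) = (1/(n+β)²){β²x² + (n − 2αβ + 2nμ e_μ(−n r_n(x))/e_μ(n r_n(x))) x + α² − (5/12 + μ e_μ(−n r_n(x))/e_μ(n r_n(x)))}. -/

import Mathlib

noncomputable section

/-- θ_k = 0 if k even, 1 if k odd. -/
def theta (k : ℕ) : ℝ := if Even k then 0 else 1

/-- Dunkl coefficients γ_μ(n). -/
def gammaD (mu : ℝ) (n : ℕ) : ℝ :=
  if Even n then
    2 ^ n * (Nat.factorial (n / 2)) * Real.Gamma ((n / 2 : ℕ) + mu + 1 / 2) / Real.Gamma (mu + 1 / 2)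
  else
    2 ^ n * (Nat.factorial (n / 2)) * Real.Gamma ((n / 2 : ℕ) + mu + 3 / 2) / Real.Gamma (mu + 1 / 2)

/-- Dunkl exponential e_μ(x) = Σ xⁿ/γ_μ(n). -/
def eD (mu x : ℝ) : ℝ := ∑' n : ℕ, x ^ n / gammaD mu n

/-- r_n(x) = x - 1/(2n). -/
def rn (n : ℕ) (x : ℝ) : ℝ := x - 1 / (2 * n)

/-- Modified Dunkl Szász–Mirakjan–Kantorovich operator K_n. -/
def Kn (mu : ℝ) (n : ℕ) (f : ℝ → ℝ) (x : ℝ) : ℝ :=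
  (n / eD mu (n * rn n x)) * ∑' k : ℕ, (n * rn n x) ^ k / gammaD mu k *
    ∫ t in (((k : ℝ) + 2 * mu * theta k) / n)..(((k : ℝ) + 1 + 2 * mu * theta k) / n), f t

/-- Stancu-type modified Dunkl Szász–Kantorovich operator K_n^*. -/
def KnStar (mu a b : ℝ) (n : ℕ) (f : ℝ → ℝ) (x : ℝ) : ℝ :=
  (n / eD mu (n * rn n x)) * ∑' k : ℕ, (n * rn n x) ^ k / gammaD mu k *
    ∫ t in (((k : ℝ) + 2 * mu * theta k) / n)..(((k : ℝ) + 1 + 2 * mu * theta k) / n),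
      f ((n * t + a) / (n + b))

/-- Dunkl Szász–Kantorovich–Stancu operator T_n^*. -/
def TnStar (mu a b : ℝ) (n : ℕ) (f : ℝ → ℝ) (x : ℝ) : ℝ :=
  (n / eD mu (n * x)) * ∑' k : ℕ, (n * x) ^ k / gammaD mu k *
    ∫ t in (((k : ℝ) + 2 * mu * theta k) / n)..(((k : ℝ) + 1 + 2 * mu * theta k) / n),
      f ((n * t + a) / (n + b))

/-- Modulus of continuity of f on [0,∞). -/
def modCont (f : ℝ → ℝ) (d : ℝ) : ℝ :=
  sSup {y | ∃ t s : ℝ, 0 ≤ t ∧ 0 ≤ s ∧ |t - s| ≤ d ∧ y = |f t - f s|}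

/-!
Write `λ_k = k + 2μθ_k` for the left endpoints (times `n`) of the Kantorovich intervals. The
recursion `γ_μ(k+1) = λ_{k+1} γ_μ(k)` makes multiplication by `λ_k` a shift of the series of
`e_μ`, so `Σ λ_k z^k/γ_μ(k) = z e_μ(z)`; together with `λ_{k+1} = λ_k + 1 + 2μ - 4μθ_k` and
`θ_k z^k = (z^k - (-z)^k)/2` this gives `Σ λ_k² z^k/γ_μ(k)` in terms of `e_μ(±z)`. The integral of
the squared Stancu-shifted distance over the `k`-th interval is a quadratic polynomial in `λ_k`,
so the central moment is a combination of these three moments at `z = n r_n(x) = nx - 1/2`, where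
`z ≥ 0` ensures `e_μ(z) > 0`.
-/

lemma theta_zero : theta 0 = 0 := by simp [theta]

lemma theta_nonneg (k : ℕ) : 0 ≤ theta k := by unfold theta; split <;> norm_num

lemma theta_succ (k : ℕ) : theta (k + 1) = 1 - theta k := by
  by_cases hk : Even k <;> simp [theta, hk, Nat.even_add_one]

lemma theta_mul_eq_half_sub (k : ℕ) (w w' : ℝ) (h : w' = (-1) ^ k * w) :
    theta k * w = (w - w') / 2 := by
  rcases Nat.even_or_odd k with hk | hk
  · simp [theta, hk, h, hk.neg_one_pow]
  · simp [theta, Nat.not_even_iff_odd.mpr hk, h, hk.neg_one_pow]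

lemma gammaD_zero {mu : ℝ} (hmu : 0 ≤ mu) : gammaD mu 0 = 1 := by
  have : Real.Gamma (mu + 2⁻¹) ≠ 0 := (Real.Gamma_pos_of_pos (by linarith)).ne'
  simp [gammaD, this]

lemma gammaD_succ {mu : ℝ} (hmu : 0 ≤ mu) (k : ℕ) :
    gammaD mu (k + 1) = (k + 1 + 2 * mu * theta (k + 1)) * gammaD mu k := by
  obtain ⟨m, rfl | rfl⟩ := Nat.even_or_odd' k
  · have hΓ : Real.Gamma (m + mu + 3 / 2) = (m + mu + 1 / 2) * Real.Gamma (m + mu + 1 / 2) := by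
      rw [← Real.Gamma_add_one (by positivity)]; ring_nf
    have h1 : (2 * m + 1) / 2 = m := by omega
    have h2 : (2 * m) / 2 = m := by omega
    simp only [gammaD, theta, Nat.not_even_bit1, even_two, Even.mul_right, ↓reduceIte, h1, h2, hΓ,
      one_div, Nat.cast_mul, Nat.cast_ofNat, mul_one]
    ring
  · have h1 : (2 * m + 1 + 1) / 2 = m + 1 := by omega
    have h2 : (2 * m + 1) / 2 = m := by omega
    have he : Even (2 * m + 1 + 1) := ⟨m + 1, by ring⟩
    have hs : (m : ℝ) + 1 + mu + 2⁻¹ = m + mu + 3 / 2 := by ring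
    simp only [gammaD, theta, he, Nat.not_even_bit1, ↓reduceIte, h1, h2, hs, Nat.factorial_succ,
      Nat.cast_mul, Nat.cast_add, Nat.cast_one, Nat.cast_ofNat, one_div, mul_zero, add_zero]
    ring

lemma factorial_le_gammaD {mu : ℝ} (hmu : 0 ≤ mu) (k : ℕ) : (k.factorial : ℝ) ≤ gammaD mu k := by
  induction k with
  | zero => simp [gammaD_zero hmu]
  | succ k ih =>
    have hγ : 0 ≤ gammaD mu k := le_trans (by positivity) ih
    have hθ := theta_nonneg (k + 1)
    rw [gammaD_succ hmu, Nat.factorial_succ, Nat.cast_mul, Nat.cast_succ]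
    exact mul_le_mul (by linarith [mul_nonneg hmu hθ]) ih (by positivity) (by positivity)

lemma gammaD_pos {mu : ℝ} (hmu : 0 ≤ mu) (k : ℕ) : 0 < gammaD mu k :=
  lt_of_lt_of_le (by positivity) (factorial_le_gammaD hmu k)

lemma summable_pow_div_gammaD {mu : ℝ} (hmu : 0 ≤ mu) (z : ℝ) :
    Summable fun k : ℕ => z ^ k / gammaD mu k := by
  refine Summable.of_norm_bounded (Real.summable_pow_div_factorial |z|) fun k => ?_
  rw [Real.norm_eq_abs, abs_div, abs_pow, abs_of_pos (gammaD_pos hmu k)]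
  gcongr
  exact factorial_le_gammaD hmu k

lemma hasSum_eD {mu : ℝ} (hmu : 0 ≤ mu) (z : ℝ) :
    HasSum (fun k : ℕ => z ^ k / gammaD mu k) (eD mu z) :=
  (summable_pow_div_gammaD hmu z).hasSum

lemma hasSum_theta_mul {mu : ℝ} (hmu : 0 ≤ mu) (z : ℝ) :
    HasSum (fun k : ℕ => theta k * (z ^ k / gammaD mu k)) ((eD mu z - eD mu (-z)) / 2) := by
  have hsplit : (fun k : ℕ => theta k * (z ^ k / gammaD mu k))
      = fun k => (z ^ k / gammaD mu k - (-z) ^ k / gammaD mu k) / 2 :=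
    funext fun k => theta_mul_eq_half_sub k _ _ (by rw [neg_pow]; ring)
  rw [hsplit]
  exact ((hasSum_eD hmu z).sub (hasSum_eD hmu (-z))).div_const 2

lemma hasSum_of_hasSum_succ {G : Type*} [AddCommGroup G] [TopologicalSpace G]
    [IsTopologicalAddGroup G] {f : ℕ → G} {s : G} (h0 : f 0 = 0)
    (h : HasSum (fun k => f (k + 1)) s) : HasSum f s := by
  simpa [h0] using (hasSum_nat_add_iff 1).mp h

lemma dunklNode_mul_succ {mu : ℝ} (hmu : 0 ≤ mu) (z : ℝ) (k : ℕ) :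
    ((k + 1 : ℕ) + 2 * mu * theta (k + 1)) * (z ^ (k + 1) / gammaD mu (k + 1))
      = z * (z ^ k / gammaD mu k) := by
  have hnode : (0 : ℝ) < k + 1 + 2 * mu * theta (k + 1) := by
    have := theta_nonneg (k + 1); positivity
  have := gammaD_pos hmu k
  rw [gammaD_succ hmu, pow_succ]
  push_cast
  field_simp

lemma hasSum_dunklNode_mul {mu : ℝ} (hmu : 0 ≤ mu) (z : ℝ) :
    HasSum (fun k : ℕ => (k + 2 * mu * theta k) * (z ^ k / gammaD mu k)) (z * eD mu z) := by
  refine hasSum_of_hasSum_succ (by simp [theta_zero]) ?_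
  simpa only [dunklNode_mul_succ hmu] using (hasSum_eD hmu z).mul_left z

lemma hasSum_dunklNode_sq_mul {mu : ℝ} (hmu : 0 ≤ mu) (z : ℝ) :
    HasSum (fun k : ℕ => (k + 2 * mu * theta k) ^ 2 * (z ^ k / gammaD mu k))
      (z ^ 2 * eD mu z + (1 + 2 * mu) * z * eD mu z - 2 * mu * z * (eD mu z - eD mu (-z))) := by
  refine hasSum_of_hasSum_succ (by simp [theta_zero]) ?_
  have hstep : ∀ k : ℕ, (((k + 1 : ℕ) : ℝ) + 2 * mu * theta (k + 1)) ^ 2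
      * (z ^ (k + 1) / gammaD mu (k + 1))
      = z * ((k + 2 * mu * theta k) * (z ^ k / gammaD mu k) + (1 + 2 * mu) * (z ^ k / gammaD mu k)
        - 4 * mu * (theta k * (z ^ k / gammaD mu k))) := by
    intro k
    rw [sq, mul_assoc, dunklNode_mul_succ hmu, theta_succ]
    push_cast
    ring
  simp only [hstep]
  rw [show z ^ 2 * eD mu z + (1 + 2 * mu) * z * eD mu z - 2 * mu * z * (eD mu z - eD mu (-z))
      = z * (z * eD mu z + (1 + 2 * mu) * eD mu z - 4 * mu * ((eD mu z - eD mu (-z)) / 2)) by ring]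
  exact (((hasSum_dunklNode_mul hmu z).add ((hasSum_eD hmu z).mul_left (1 + 2 * mu))).sub
    ((hasSum_theta_mul hmu z).mul_left (4 * mu))).mul_left z

lemma integral_sq_affine {n b : ℝ} (hn : n ≠ 0) (hnb : n + b ≠ 0) (a x L : ℝ) :
    ∫ t in (L / n)..((L + 1) / n), ((n * t + a) / (n + b) - x) ^ 2
      = ((L + a - (n + b) * x) ^ 2 + (L + a - (n + b) * x) + 1 / 3) / (n * (n + b) ^ 2) := by
  set c := a - (n + b) * x
  have hshift : ∀ t, (n * t + a) / (n + b) - x = (n * t + c) / (n + b) := fun t => by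
    field_simp; ring
  simp_rw [hshift, div_pow]
  rw [intervalIntegral.integral_div, intervalIntegral.integral_comp_mul_add (fun u => u ^ 2) hn,
    integral_pow, smul_eq_mul, mul_div_cancel₀ _ hn, mul_div_cancel₀ _ hn]
  field_simp
  ring

lemma eD_pos {mu : ℝ} (hmu : 0 ≤ mu) {z : ℝ} (hz : 0 ≤ z) : 0 < eD mu z := by
  have h0 := le_hasSum (hasSum_eD hmu z) 0 fun k _ =>
    div_nonneg (pow_nonneg hz k) (gammaD_pos hmu k).le
  rw [pow_zero, gammaD_zero hmu, div_one] at h0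
  linarith

lemma hasSum_KnStar_sq_sub {mu : ℝ} (hmu : 0 ≤ mu) {n b : ℝ} (hn : n ≠ 0) (hnb : n + b ≠ 0)
    (a x z : ℝ) :
    HasSum (fun k : ℕ => z ^ k / gammaD mu k *
        ∫ t in ((k + 2 * mu * theta k) / n)..((k + 1 + 2 * mu * theta k) / n),
          ((n * t + a) / (n + b) - x) ^ 2)
      (((z ^ 2 * eD mu z + (1 + 2 * mu) * z * eD mu z - 2 * mu * z * (eD mu z - eD mu (-z)))
        + (2 * (a - (n + b) * x) + 1) * (z * eD mu z)
        + ((a - (n + b) * x) ^ 2 + (a - (n + b) * x) + 1 / 3) * eD mu z) / (n * (n + b) ^ 2)) := by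
  have hterm : ∀ k : ℕ, z ^ k / gammaD mu k *
      ∫ t in ((k + 2 * mu * theta k) / n)..((k + 1 + 2 * mu * theta k) / n),
        ((n * t + a) / (n + b) - x) ^ 2
      = ((k + 2 * mu * theta k) ^ 2 * (z ^ k / gammaD mu k)
        + (2 * (a - (n + b) * x) + 1) * ((k + 2 * mu * theta k) * (z ^ k / gammaD mu k))
        + ((a - (n + b) * x) ^ 2 + (a - (n + b) * x) + 1 / 3) * (z ^ k / gammaD mu k))
        / (n * (n + b) ^ 2) := by
    intro k
    rw [add_right_comm _ (1 : ℝ), integral_sq_affine hn hnb]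
    ring
  simp only [hterm]
  exact (((hasSum_dunklNode_sq_mul hmu z).add ((hasSum_dunklNode_mul hmu z).mul_left _)).add
    ((hasSum_eD hmu z).mul_left _)).div_const _

theorem KnStar_central_second (mu a b : ℝ) (hmu : 0 ≤ mu) (ha : 0 ≤ a) (hab : a ≤ b)
    (n : ℕ) (hn : 0 < n) (x : ℝ) (hx : 1 / 2 ≤ x) :
    KnStar mu a b n (fun t => (t - x) ^ 2) x
      = (1 / (n + b) ^ 2)
          * (b ^ 2 * x ^ 2
            + (n - 2 * a * b + 2 * n * mu * eD mu (-(n * rn n x)) / eD mu (n * rn n x)) * x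
            + a ^ 2 - (5 / 12 + mu * eD mu (-(n * rn n x)) / eD mu (n * rn n x))) := by
  have hN : (1 : ℝ) ≤ n := by exact_mod_cast hn
  have hnb : (n : ℝ) + b ≠ 0 := (by linarith : (0 : ℝ) < n + b).ne'
  have hz : (n : ℝ) * rn n x = n * x - 1 / 2 := by
    rw [rn]; field_simp
  have hE : eD mu (n * x - 1 / 2) ≠ 0 := (eD_pos hmu (by nlinarith)).ne'
  simp only [KnStar]
  rw [(hasSum_KnStar_sq_sub hmu (by positivity) hnb a x _).tsum_eq, hz]
  generalize eD mu (n * x - 1 / 2) = E at hE ⊢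
  field_simp
  ring
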